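/- arXiv:1312.6530 — 2 statements merged into one kernel-verified Lean document; each statement's English description precedes it below -/
import Mathlib

section
/- If Re(c − a − b) > 0 and c is not a nonpositive integer, then the hypergeometric series at z = 1 converges and ₂F₁(a,b;c;1) = Γ(c)Γ(c−a−b)/(Γ(c−a)Γ(c−b)). -/
open Complex

/-- The `k`-th term of the Gauss hypergeometric series `₂F₁(a, b; c; z)`. -/
noncomputable def hypTerm (a b c z : ℂ) (k : ℕ) : ℂ :=
  ((ascPochhammer ℂ k).eval a * (ascPochhammer ℂ k).eval b /
    ((ascPochhammer ℂ k).eval c * (k.factorial : ℂ))) * z ^ k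

/-!
Write `F(c) = ∑ₖ (a)ₖ (b)ₖ / ((c)ₖ k!)`. By Euler's limit formula for `Γ`, the `k`-th term is
asymptotic to `Γ(c) / (Γ(a) Γ(b)) · k ^ (a + b - c - 1)`, so the series converges when
`Re (c - a - b) > 0`; the same asymptotics make the termwise form of Gauss's contiguous relation a
telescoping series, whence `c (c - a - b) F(c) = (c - a) (c - b) F(c + 1)`. Iterating,
`F(c) = (c - a)ₙ (c - b)ₙ / ((c)ₙ (c - a - b)ₙ) · F(c + n)`. As `n → ∞` the Pochhammer ratio
tends to `Γ(c) Γ(c - a - b) / (Γ(c - a) Γ(c - b))`, again by Euler's formula, and `F(c + n) → 1`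
by dominated convergence for series.
-/

open Filter Topology Asymptotics Polynomial
open scoped Nat

theorem ascPochhammer_eval_eq_prod_range {R : Type*} [CommSemiring R] (n : ℕ) (r : R) :
    (ascPochhammer R n).eval r = ∏ j ∈ Finset.range n, (r + j) := by
  induction n with
  | zero => simp
  | succ n ih => rw [ascPochhammer_succ_eval, ih, Finset.prod_range_succ]

theorem ascPochhammer_eval_ne_zero {R : Type*} [CommRing R] [IsDomain R] {r : R}
    (hr : ∀ k : ℕ, r ≠ -k) (n : ℕ) : (ascPochhammer R n).eval r ≠ 0 := by
  rw [ne_eq, ascPochhammer_eval_eq_zero_iff]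
  rintro ⟨k, -, hk⟩
  exact hr k (by rw [hk, neg_neg])

theorem norm_ascPochhammer_eval_le {𝕜 : Type*} [NormedField 𝕜] {x y : 𝕜}
    (h : ∀ j : ℕ, ‖x + j‖ ≤ ‖y + j‖) (n : ℕ) :
    ‖(ascPochhammer 𝕜 n).eval x‖ ≤ ‖(ascPochhammer 𝕜 n).eval y‖ := by
  induction n with
  | zero => simp
  | succ n ih =>
    simp only [ascPochhammer_succ_eval, norm_mul]
    exact mul_le_mul ih (h n) (norm_nonneg _) (norm_nonneg _)

namespace Complex

theorem GammaSeq_eq_div_ascPochhammer (s : ℂ) (n : ℕ) :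
    GammaSeq s n = n ^ s * n ! / (ascPochhammer ℂ (n + 1)).eval s := by
  rw [GammaSeq, ascPochhammer_eval_eq_prod_range]

theorem tendsto_GammaSeq_inv (s : ℂ) :
    Tendsto (fun n ↦ (GammaSeq s n)⁻¹) atTop (𝓝 (Gamma s)⁻¹) := by
  by_cases hs : Gamma s = 0
  -- at a pole `s = -m`, also `GammaSeq s n = 0` for `n ≥ m`, a division by zero
  · obtain ⟨m, rfl⟩ := (Gamma_eq_zero_iff s).1 hs
    rw [hs, inv_zero]
    refine tendsto_const_nhds.congr' ?_
    filter_upwards [eventually_ge_atTop m] with n hn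
    rw [GammaSeq_eq_div_ascPochhammer, ascPochhammer_eval_neg_coe_nat_of_lt (by omega),
      div_zero, inv_zero]
  · exact (GammaSeq_tendsto_Gamma s).inv₀ hs

theorem tendsto_cpow_mul_ascPochhammer_ratio (x y z w : ℂ) :
    Tendsto (fun n : ℕ ↦ (n : ℂ) ^ (z + w - x - y) *
        ((ascPochhammer ℂ (n + 1)).eval x * (ascPochhammer ℂ (n + 1)).eval y /
          ((ascPochhammer ℂ (n + 1)).eval z * (ascPochhammer ℂ (n + 1)).eval w)))
      atTop (𝓝 (Gamma z * Gamma w / (Gamma x * Gamma y))) := by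
  have hlim := ((tendsto_GammaSeq_inv x).mul (tendsto_GammaSeq_inv y)).mul
    ((GammaSeq_tendsto_Gamma z).mul (GammaSeq_tendsto_Gamma w))
  rw [← mul_inv, ← div_eq_inv_mul] at hlim
  refine hlim.congr' ?_
  filter_upwards [eventually_ne_atTop 0] with n hn
  have hn' : (n : ℂ) ≠ 0 := Nat.cast_ne_zero.2 hn
  have hpow (s : ℂ) : (n : ℂ) ^ s ≠ 0 := by simp [cpow_eq_zero_iff, hn']
  have hfac : (n ! : ℂ) ≠ 0 := Nat.cast_ne_zero.2 n.factorial_ne_zero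
  have hpoch (s : ℂ) : (ascPochhammer ℂ (n + 1)).eval s = n ^ s * n ! * (GammaSeq s n)⁻¹ := by
    rw [GammaSeq_eq_div_ascPochhammer, inv_div, mul_div_cancel₀ _ (mul_ne_zero (hpow s) hfac)]
  rw [hpoch x, hpoch y, hpoch z, hpoch w, cpow_sub _ _ hn', cpow_sub _ _ hn', cpow_add _ _ hn']
  simp only [div_eq_mul_inv, mul_inv, inv_inv]
  grind

theorem tendsto_ascPochhammer_ratio {x y z w : ℂ} (h : x + y = z + w) :
    Tendsto (fun n : ℕ ↦ (ascPochhammer ℂ n).eval x * (ascPochhammer ℂ n).eval y /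
        ((ascPochhammer ℂ n).eval z * (ascPochhammer ℂ n).eval w))
      atTop (𝓝 (Gamma z * Gamma w / (Gamma x * Gamma y))) := by
  rw [← tendsto_add_atTop_iff_nat 1]
  have h₀ : z + w - x - y = 0 := by linear_combination -h
  simpa only [h₀, cpow_zero, one_mul] using tendsto_cpow_mul_ascPochhammer_ratio x y z w

theorem natCast_sub_norm_le_norm_add_natCast (c : ℂ) (n : ℕ) : (n : ℝ) - ‖c‖ ≤ ‖c + n‖ := by
  simpa [add_comm] using norm_sub_norm_le (n : ℂ) (-c)

end Complex

section CpowAsymptotics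

variable {f : ℕ → ℂ} {s L : ℂ}

theorem isBigO_rpow_neg_re_of_tendsto_cpow_mul
    (hf : Tendsto (fun n : ℕ ↦ (n : ℂ) ^ s * f n) atTop (𝓝 L)) :
    f =O[atTop] fun n : ℕ ↦ (n : ℝ) ^ (-s.re) := by
  have hbound : (fun n : ℕ ↦ (n : ℂ) ^ (-s) * ((n : ℂ) ^ s * f n)) =O[atTop]
      fun n : ℕ ↦ (n : ℝ) ^ (-s.re) * 1 := by
    refine IsBigO.mul (IsBigO.of_norm_eventuallyLE ?_) (hf.isBigO_one ℝ)
    filter_upwards [eventually_gt_atTop 0] with n hn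
    rw [norm_natCast_cpow_of_pos hn, neg_re]
  simp only [mul_one] at hbound
  refine hbound.congr' ?_ EventuallyEq.rfl
  filter_upwards [eventually_ne_atTop 0] with n hn
  rw [cpow_neg, inv_mul_cancel_left₀ (by simp [cpow_eq_zero_iff, hn])]

theorem tendsto_zero_of_tendsto_cpow_mul (hs : 0 < s.re)
    (hf : Tendsto (fun n : ℕ ↦ (n : ℂ) ^ s * f n) atTop (𝓝 L)) :
    Tendsto f atTop (𝓝 0) :=
  (isBigO_rpow_neg_re_of_tendsto_cpow_mul hf).trans_tendsto
    ((tendsto_rpow_neg_atTop hs).comp tendsto_natCast_atTop_atTop)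

theorem summable_of_tendsto_cpow_mul (hs : 1 < s.re)
    (hf : Tendsto (fun n : ℕ ↦ (n : ℂ) ^ s * f n) atTop (𝓝 L)) :
    Summable f :=
  summable_of_isBigO_nat' (Real.summable_nat_rpow.2 (by linarith))
    (isBigO_rpow_neg_re_of_tendsto_cpow_mul hf)

end CpowAsymptotics

section Hypergeometric

variable {a b c : ℂ}

theorem hypTerm_one (a b c : ℂ) (k : ℕ) :
    hypTerm a b c 1 k = (ascPochhammer ℂ k).eval a * (ascPochhammer ℂ k).eval b /
      ((ascPochhammer ℂ k).eval c * k !) := by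
  simp [hypTerm]

theorem tendsto_cpow_mul_hypTerm_one_succ (a b c : ℂ) :
    Tendsto (fun n : ℕ ↦ (n : ℂ) ^ (c + 1 - a - b) * hypTerm a b c 1 (n + 1)) atTop
      (𝓝 (Gamma c / (Gamma a * Gamma b))) := by
  simpa only [hypTerm_one, ascPochhammer_eval_one, Gamma_one, mul_one] using
    tendsto_cpow_mul_ascPochhammer_ratio a b c 1

theorem summable_hypTerm_one (h : 0 < (c - a - b).re) : Summable (hypTerm a b c 1) := by
  refine (summable_nat_add_iff 1).1 <|
    summable_of_tendsto_cpow_mul ?_ (tendsto_cpow_mul_hypTerm_one_succ a b c)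
  simp only [sub_re, add_re, one_re] at h ⊢
  linarith

theorem tendsto_natCast_add_one_mul_hypTerm_one_succ (h : 0 < (c - a - b).re) :
    Tendsto (fun n : ℕ ↦ ((n : ℂ) + 1) * hypTerm a b c 1 (n + 1)) atTop (𝓝 0) := by
  have hlim := ((tendsto_const_nhds (x := (1 : ℂ))).add tendsto_inv_atTop_nhds_zero_nat).mul
    (tendsto_cpow_mul_hypTerm_one_succ a b c)
  refine tendsto_zero_of_tendsto_cpow_mul h (hlim.congr' ?_)
  filter_upwards [eventually_ne_atTop 0] with n hn
  have hn' : (n : ℂ) ≠ 0 := Nat.cast_ne_zero.2 hn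
  rw [show c + 1 - a - b = (c - a - b) + 1 by ring, cpow_add _ _ hn', cpow_one]
  field_simp

theorem hypTerm_one_contiguous (hc : ∀ k : ℕ, c ≠ -k) (k : ℕ) :
    c * (c - a - b) * hypTerm a b c 1 k - (c - a) * (c - b) * hypTerm a b (c + 1) 1 k =
      c * k * hypTerm a b c 1 k - c * (k + 1) * hypTerm a b c 1 (k + 1) := by
  have hc₀ : c ≠ 0 := by simpa using hc 0
  have hck : c + k ≠ 0 := fun h ↦ hc k (eq_neg_of_add_eq_zero_left h)
  have hpoch := ascPochhammer_eval_ne_zero hc k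
  have hshift : (ascPochhammer ℂ k).eval (c + 1) = (ascPochhammer ℂ k).eval c * (c + k) / c := by
    rw [eq_div_iff hc₀, ← ascPochhammer_succ_eval, ascPochhammer_succ_left]
    simp [eval_comp, mul_comm]
  simp only [hypTerm_one, ascPochhammer_succ_eval, hshift, Nat.factorial_succ, Nat.cast_mul,
    Nat.cast_add, Nat.cast_one]
  field_simp
  ring

theorem tsum_hypTerm_one_eq_mul_tsum_add_one (h : 0 < (c - a - b).re) (hc : ∀ k : ℕ, c ≠ -k) :
    ∑' k, hypTerm a b c 1 k =
      (c - a) * (c - b) / (c * (c - a - b)) * ∑' k, hypTerm a b (c + 1) 1 k := by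
  have h₁ : 0 < (c + 1 - a - b).re := by simp only [sub_re, add_re, one_re] at h ⊢; linarith
  have hsum₀ := (summable_hypTerm_one h).mul_left (c * (c - a - b))
  have hsum₁ := (summable_hypTerm_one h₁).mul_left ((c - a) * (c - b))
  have hpartial (n : ℕ) : ∑ k ∈ Finset.range n,
      (c * (c - a - b) * hypTerm a b c 1 k - (c - a) * (c - b) * hypTerm a b (c + 1) 1 k) =
        -(c * n * hypTerm a b c 1 n) := by
    have := Finset.sum_range_sub' (fun k : ℕ ↦ c * k * hypTerm a b c 1 k) n
    push_cast at this
    simpa [hypTerm_one_contiguous hc] using this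
  have hdecay : Tendsto (fun n : ℕ ↦ -(c * n * hypTerm a b c 1 n)) atTop (𝓝 0) := by
    rw [← tendsto_add_atTop_iff_nat 1]
    simpa [mul_assoc] using ((tendsto_natCast_add_one_mul_hypTerm_one_succ h).const_mul c).neg
  have hzero := tendsto_nhds_unique (hsum₀.sub hsum₁).hasSum.tendsto_sum_nat
    (hdecay.congr fun n ↦ (hpartial n).symm)
  rw [hsum₀.tsum_sub hsum₁, tsum_mul_left, tsum_mul_left] at hzero
  have hc₀ : c ≠ 0 := by simpa using hc 0
  have hcab : c - a - b ≠ 0 := fun h₀ ↦ by simp [h₀] at h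
  field_simp
  linear_combination hzero

theorem tsum_hypTerm_one_eq_ascPochhammer_ratio_mul (h : 0 < (c - a - b).re)
    (hc : ∀ k : ℕ, c ≠ -k) (n : ℕ) :
    ∑' k, hypTerm a b c 1 k =
      (ascPochhammer ℂ n).eval (c - a) * (ascPochhammer ℂ n).eval (c - b) /
          ((ascPochhammer ℂ n).eval c * (ascPochhammer ℂ n).eval (c - a - b)) *
        ∑' k, hypTerm a b (c + n) 1 k := by
  induction n with
  | zero => simp
  | succ n ih =>
    have hn : 0 < (c + n - a - b).re := by
      simp only [sub_re, add_re, natCast_re] at h ⊢; linarith [n.cast_nonneg (α := ℝ)]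
    have hcn : ∀ k : ℕ, c + n ≠ -k := fun k hk ↦
      hc (n + k) (by push_cast; linear_combination hk)
    rw [ih, tsum_hypTerm_one_eq_mul_tsum_add_one hn hcn, Nat.cast_succ, ← add_assoc,
      ← mul_assoc, div_mul_div_comm]
    simp only [ascPochhammer_succ_eval]
    congr 2 <;> ring

theorem tendsto_hypTerm_one_add_nat (a b c : ℂ) (k : ℕ) :
    Tendsto (fun n : ℕ ↦ hypTerm a b (c + n) 1 k) atTop (𝓝 (if k = 0 then 1 else 0)) := by
  rcases Nat.eq_zero_or_pos k with rfl | hk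
  · simp [hypTerm_one]
  simp only [hk.ne', if_false, hypTerm_one]
  rw [tendsto_zero_iff_norm_tendsto_zero]
  simp only [norm_div, norm_mul, norm_natCast]
  refine tendsto_const_nhds.div_atTop (Tendsto.atTop_mul_const (by positivity) ?_)
  refine (ascPochhammer ℂ k).tendsto_norm_atTop ?_ ?_
  · rw [← natDegree_pos_iff_degree_pos, ascPochhammer_natDegree]
    exact hk
  · exact tendsto_atTop_mono (natCast_sub_norm_le_norm_add_natCast c)
      (tendsto_atTop_add_const_right _ _ tendsto_natCast_atTop_atTop)

theorem norm_hypTerm_one_le_of_norm_add_le {c₀ : ℂ} (hc₀ : ∀ k : ℕ, c₀ ≠ -k)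
    (h : ∀ j : ℕ, ‖c₀ + j‖ ≤ ‖c + j‖) (k : ℕ) :
    ‖hypTerm a b c 1 k‖ ≤ ‖hypTerm a b c₀ 1 k‖ := by
  simp only [hypTerm_one, norm_div, norm_mul, norm_natCast]
  have hpos : 0 < ‖(ascPochhammer ℂ k).eval c₀‖ :=
    norm_pos_iff.2 (ascPochhammer_eval_ne_zero hc₀ k)
  gcongr
  exact norm_ascPochhammer_eval_le h k

theorem tendsto_tsum_hypTerm_one_add_nat (a b c : ℂ) :
    Tendsto (fun n : ℕ ↦ ∑' k, hypTerm a b (c + n) 1 k) atTop (𝓝 1) := by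
  obtain ⟨m, hm⟩ := exists_nat_gt (‖a‖ + ‖b‖)
  have hm_re : 0 < ((m : ℂ) - a - b).re := by
    simp only [sub_re, natCast_re]
    linarith [re_le_norm a, re_le_norm b]
  have hm_pole : ∀ k : ℕ, (m : ℂ) ≠ -k := fun k hk ↦ by
    have := congrArg re hk
    simp only [natCast_re, neg_re] at this
    linarith [norm_nonneg a, norm_nonneg b, k.cast_nonneg (α := ℝ)]
  have hdom : ∀ᶠ n : ℕ in atTop, ∀ k, ‖hypTerm a b (c + n) 1 k‖ ≤ ‖hypTerm a b m 1 k‖ := by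
    filter_upwards [eventually_ge_atTop ⌈m + ‖c‖⌉₊] with n hn k
    refine norm_hypTerm_one_le_of_norm_add_le hm_pole (fun j ↦ ?_) k
    have hn' : (m : ℝ) + ‖c‖ ≤ n := Nat.ceil_le.1 hn
    calc ‖(m : ℂ) + j‖ = (m : ℝ) + j := by norm_cast
      _ ≤ ((n + j : ℕ) : ℝ) - ‖c‖ := by push_cast; linarith
      _ ≤ ‖c + n + j‖ := by simpa [add_assoc] using natCast_sub_norm_le_norm_add_natCast c (n + j)
  simpa using tendsto_tsum_of_dominated_convergence (summable_hypTerm_one hm_re).norm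
    (tendsto_hypTerm_one_add_nat a b c) hdom

end Hypergeometric

/-- Gauss's summation theorem: if `Re (c - a - b) > 0` and `c` is not a nonpositive
integer, then the hypergeometric series converges at `z = 1` and
`₂F₁(a, b; c; 1) = Γ(c) Γ(c-a-b) / (Γ(c-a) Γ(c-b))`. -/
theorem gauss_summation (a b c : ℂ) (h : 0 < (c - a - b).re)
    (hc : ∀ k : ℕ, c ≠ -(k : ℂ)) :
    Summable (hypTerm a b c 1) ∧
      ∑' k : ℕ, hypTerm a b c 1 k =
        Complex.Gamma c * Complex.Gamma (c - a - b) /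
          (Complex.Gamma (c - a) * Complex.Gamma (c - b)) := by
  refine ⟨summable_hypTerm_one h, ?_⟩
  have hlim := (tendsto_ascPochhammer_ratio (x := c - a) (y := c - b) (z := c) (w := c - a - b)
    (by ring)).mul (tendsto_tsum_hypTerm_one_add_nat a b c)
  rw [mul_one] at hlim
  exact tendsto_nhds_unique
    (tendsto_const_nhds.congr (tsum_hypTerm_one_eq_ascPochhammer_ratio_mul h hc)) hlim
end

section
/- For |z| < 1 and c not a nonpositive integer, ₂F₁(a,b;c;z) = (1−z)^{c−a−b} ₂F₁(c−a, c−b; c; z) (the Euler transform). -/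
open Complex

/-- The Gauss hypergeometric function `₂F₁(a, b; c; z)`, defined by its power series. -/
noncomputable def hyp2F1 (a b c z : ℂ) : ℂ :=
  ∑' k : ℕ, ((ascPochhammer ℂ k).eval a * (ascPochhammer ℂ k).eval b /
    ((ascPochhammer ℂ k).eval c * (k.factorial : ℂ))) * z ^ k

/-!
The binomial series gives `(1 - z) ^ (c - a - b) = ₂F₁(a + b - c, 1; 1; z)`, so the right-hand
side is a Cauchy product of two hypergeometric series, both absolutely convergent on the unit disc
as `c` is not a nonpositive integer. Its `n`-th coefficient `Sₙ` satisfies the recurrence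
`(n + 1) (c + n) Sₙ₊₁ = (a + n) (b + n) Sₙ` of the coefficients of `₂F₁(a, b; c; z)`: summed over
`i + j = n`, the defect of this recurrence telescopes against `G(i, j) = j (c + j - 1) uᵢⱼ`, where
`uᵢⱼ` is the `(i, j)` term of the product.
-/

open Finset

theorem Finset.Nat.sum_antidiagonal_sub_shift {M : Type*} [AddCommGroup M] (G : ℕ × ℕ → M)
    (n : ℕ) :
    ∑ p ∈ antidiagonal n, (G (p.1 + 1, p.2) - G (p.1, p.2 + 1)) = G (n + 1, 0) - G (0, n + 1) := by
  rw [sum_sub_distrib, eq_sub_of_add_eq' (Nat.sum_antidiagonal_succ (f := G)).symm,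
    eq_sub_of_add_eq' (Nat.sum_antidiagonal_succ' (f := G)).symm]
  abel

theorem ordinaryHypergeometric_eq_tsum_coefficient_smul {𝕂 𝔸 : Type*} [Field 𝕂] [Ring 𝔸]
    [Algebra 𝕂 𝔸] [TopologicalSpace 𝔸] [IsTopologicalRing 𝔸] (a b c : 𝕂) (x : 𝔸) :
    ₂F₁ a b c x = ∑' n, ordinaryHypergeometricCoefficient a b c n • x ^ n :=
  ordinaryHypergeometric_sum_eq a b c x

section Coefficient

variable {𝕂 : Type*} [Field 𝕂] [CharZero 𝕂]

theorem ordinaryHypergeometricCoefficient_succ (a b : 𝕂) {c : 𝕂} {n : ℕ} (hc : c + n ≠ 0) :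
    ((n : 𝕂) + 1) * (c + n) * ordinaryHypergeometricCoefficient a b c (n + 1) =
      (a + n) * (b + n) * ordinaryHypergeometricCoefficient a b c n := by
  by_cases hpoch : (ascPochhammer 𝕂 n).eval c = 0
  · -- both sides vanish, through `0⁻¹ = 0`
    simp [ordinaryHypergeometricCoefficient, ascPochhammer_succ_eval, hpoch]
  simp only [ordinaryHypergeometricCoefficient, ascPochhammer_succ_eval, Nat.factorial_succ,
    Nat.cast_mul, Nat.cast_succ]
  field_simp

theorem ordinaryHypergeometricCoefficient_one_one_succ (t : 𝕂) (n : ℕ) :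
    ((n : 𝕂) + 1) * ordinaryHypergeometricCoefficient t 1 1 (n + 1) =
      (t + n) * ordinaryHypergeometricCoefficient t 1 1 n := by
  have hn : (1 : 𝕂) + n ≠ 0 := by norm_cast; omega
  apply mul_left_cancel₀ hn
  linear_combination ordinaryHypergeometricCoefficient_succ t 1 hn

variable (a b c : 𝕂)

/-- The `(i, j)` term of the Cauchy product of `(1 - z) ^ (c - a - b) = ₂F₁(a + b - c, 1; 1; z)` and
`₂F₁(c - a, c - b; c; z)`. -/
noncomputable def eulerSummand (p : ℕ × ℕ) : 𝕂 :=
  ordinaryHypergeometricCoefficient (a + b - c) 1 1 p.1 *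
    ordinaryHypergeometricCoefficient (c - a) (c - b) c p.2

theorem eulerSummand_certificate {i j : ℕ} (hc : c + j ≠ 0) :
    ((i + j : 𝕂) + 1) * (c + (i + j)) * eulerSummand a b c (i + 1, j) -
        (a + (i + j)) * (b + (i + j)) * eulerSummand a b c (i, j) =
      j * (c + j - 1) * eulerSummand a b c (i + 1, j) -
        (j + 1) * (c + j) * eulerSummand a b c (i, j + 1) := by
  have hv := ordinaryHypergeometricCoefficient_one_one_succ (a + b - c) i
  have hu := ordinaryHypergeometricCoefficient_succ (c - a) (c - b) hc
  simp only [eulerSummand]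
  linear_combination
    ((c + i + 2 * j) * ordinaryHypergeometricCoefficient (c - a) (c - b) c j) * hv +
      ordinaryHypergeometricCoefficient (a + b - c) 1 1 i * hu

theorem sum_eulerSummand_succ (hc : ∀ k : ℕ, c ≠ -k) (n : ℕ) :
    ((n : 𝕂) + 1) * (c + n) * ∑ p ∈ antidiagonal (n + 1), eulerSummand a b c p =
      (a + n) * (b + n) * ∑ p ∈ antidiagonal n, eulerSummand a b c p := by
  set G : ℕ × ℕ → 𝕂 := fun p => p.2 * (c + p.2 - 1) * eulerSummand a b c p
  have hstep : ∀ p ∈ antidiagonal n,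
      ((n : 𝕂) + 1) * (c + n) * eulerSummand a b c (p.1 + 1, p.2) -
        (a + n) * (b + n) * eulerSummand a b c p = G (p.1 + 1, p.2) - G (p.1, p.2 + 1) := by
    rintro ⟨i, j⟩ hij
    rw [HasAntidiagonal.mem_antidiagonal] at hij
    subst hij
    have hcert := eulerSummand_certificate a b c (i := i)
      (fun h => hc j (eq_neg_of_add_eq_zero_left h))
    simp only [G]
    push_cast
    linear_combination hcert
  have htelescope := (sum_congr rfl hstep).trans (Nat.sum_antidiagonal_sub_shift G n)
  rw [sum_sub_distrib, ← mul_sum, ← mul_sum] at htelescope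
  rw [Nat.sum_antidiagonal_succ]
  simp only [G] at htelescope
  push_cast at htelescope
  linear_combination htelescope

theorem sum_antidiagonal_eulerSummand (hc : ∀ k : ℕ, c ≠ -k) (n : ℕ) :
    ∑ p ∈ antidiagonal n, eulerSummand a b c p = ordinaryHypergeometricCoefficient a b c n := by
  induction n with
  | zero => simp [eulerSummand]
  | succ n ih =>
    have hcn : c + n ≠ 0 := fun h => hc n (eq_neg_of_add_eq_zero_left h)
    apply mul_left_cancel₀ (mul_ne_zero (Nat.cast_add_one_ne_zero n) hcn)
    rw [sum_eulerSummand_succ a b c hc, ih, ordinaryHypergeometricCoefficient_succ a b hcn]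

end Coefficient

section Analytic

variable {𝕂 𝔸 : Type*} [RCLike 𝕂] [NormedDivisionRing 𝔸] [NormedAlgebra 𝕂 𝔸]

theorem one_le_radius_ordinaryHypergeometricSeries (a b : 𝕂) {c : 𝕂} (hc : ∀ k : ℕ, c ≠ -k) :
    1 ≤ (ordinaryHypergeometricSeries 𝔸 a b c).radius := by
  by_cases hab : ∀ k : ℕ, (k : 𝕂) ≠ -a ∧ (k : 𝕂) ≠ -b
  · rw [ordinaryHypergeometricSeries_radius_eq_one 𝔸 a b c fun k =>
      ⟨(hab k).1, (hab k).2, fun h => hc k (neg_eq_iff_eq_neg.mp h.symm)⟩]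
  · push Not at hab
    obtain ⟨k, hk⟩ := hab
    by_cases ha : (k : 𝕂) = -a
    · rw [neg_eq_iff_eq_neg.mp ha.symm, ordinaryHypergeometric_radius_top_of_neg_nat₁]
      exact le_top
    · rw [neg_eq_iff_eq_neg.mp (hk ha).symm, ordinaryHypergeometric_radius_top_of_neg_nat₂]
      exact le_top

theorem summable_norm_ordinaryHypergeometricCoefficient_smul_pow (a b : 𝕂) {c : 𝕂}
    (hc : ∀ k : ℕ, c ≠ -k) {x : 𝔸} (hx : ‖x‖ < 1) :
    Summable fun n => ‖ordinaryHypergeometricCoefficient a b c n • x ^ n‖ := by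
  have hx' : x ∈ Metric.eball (0 : 𝔸) (ordinaryHypergeometricSeries 𝔸 a b c).radius := by
    refine Metric.eball_subset_eball (one_le_radius_ordinaryHypergeometricSeries a b hc) ?_
    simpa [← ENNReal.ofReal_one, Metric.eball_ofReal] using hx
  simpa only [ordinaryHypergeometricSeries_apply_eq] using
    (ordinaryHypergeometricSeries 𝔸 a b c).summable_norm_apply hx'

theorem ordinaryHypergeometric_mul_ordinaryHypergeometric [CompleteSpace 𝔸] (a b a' b' : 𝕂)
    {c c' : 𝕂} (hc : ∀ k : ℕ, c ≠ -k) (hc' : ∀ k : ℕ, c' ≠ -k) {x : 𝔸} (hx : ‖x‖ < 1) :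
    ₂F₁ a b c x * ₂F₁ a' b' c' x = ∑' n, (∑ p ∈ antidiagonal n,
      ordinaryHypergeometricCoefficient a b c p.1 *
        ordinaryHypergeometricCoefficient a' b' c' p.2) • x ^ n := by
  have h1 := summable_norm_ordinaryHypergeometricCoefficient_smul_pow a b hc hx
  have h2 := summable_norm_ordinaryHypergeometricCoefficient_smul_pow a' b' hc' hx
  rw [ordinaryHypergeometric_eq_tsum_coefficient_smul a b c,
    ordinaryHypergeometric_eq_tsum_coefficient_smul a' b' c']
  refine (tsum_mul_tsum_eq_tsum_sum_antidiagonal_of_summable_norm h1 h2).trans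
      (tsum_congr fun n => ?_)
  rw [sum_smul]
  refine sum_congr rfl fun p hp => ?_
  rw [smul_mul_smul_comm, ← pow_add, HasAntidiagonal.mem_antidiagonal.mp hp]

end Analytic

theorem hyp2F1_eq_ordinaryHypergeometric (a b c z : ℂ) : hyp2F1 a b c z = ₂F₁ a b c z := by
  rw [ordinaryHypergeometric_eq_tsum_coefficient_smul, hyp2F1]
  refine tsum_congr fun n => ?_
  rw [smul_eq_mul, ordinaryHypergeometricCoefficient]
  ring

theorem Complex.one_sub_cpow_neg_eq_ordinaryHypergeometric (t : ℂ) {z : ℂ} (hz : ‖z‖ < 1) :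
    (1 - z) ^ (-t) = ₂F₁ t 1 1 z := by
  have hsum := one_add_cpow_hasFPowerSeriesOnBall_zero (a := -t).hasSum (y := -z)
    (by simpa [← ENNReal.ofReal_one, Metric.eball_ofReal] using hz)
  rw [binomialSeries_eq_ordinaryHypergeometricSeries (b := 1) (by norm_cast; simp)] at hsum
  simp only [FormalMultilinearSeries.compContinuousLinearMap_apply, Function.comp_def,
    neg_apply, ContinuousLinearMap.id_apply, neg_neg, zero_sub, ← sub_eq_add_neg] at hsum
  exact hsum.tsum_eq.symm

/-- The Euler transform: `₂F₁(a,b;c;z) = (1-z)^(c-a-b) ₂F₁(c-a, c-b; c; z)`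
for `|z| < 1` and `c` not a nonpositive integer. -/
theorem euler_transform (a b c z : ℂ) (hz : ‖z‖ < 1)
    (hc : ∀ k : ℕ, c ≠ -(k : ℂ)) :
    hyp2F1 a b c z = (1 - z) ^ (c - a - b) * hyp2F1 (c - a) (c - b) c z := by
  have h1 : ∀ k : ℕ, (1 : ℂ) ≠ -k := fun k => by
    rw [ne_eq, eq_neg_iff_add_eq_zero]
    norm_cast
    omega
  rw [hyp2F1_eq_ordinaryHypergeometric, hyp2F1_eq_ordinaryHypergeometric,
    show c - a - b = -(a + b - c) by ring, one_sub_cpow_neg_eq_ordinaryHypergeometric _ hz,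
    ordinaryHypergeometric_mul_ordinaryHypergeometric _ _ _ _ h1 hc hz,
    ordinaryHypergeometric_eq_tsum_coefficient_smul]
  refine tsum_congr fun n => ?_
  simp only [← sum_antidiagonal_eulerSummand a b c hc n, eulerSummand]
end
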